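/- arXiv:2508.06907 — 3 statements merged into one kernel-verified Lean document; each statement's English description precedes it below -/
import Mathlib

section
/- Let m ≥ 1, let U = u₁…uₘ and W = w₁…wₘ be permutations of length m and V = v₁…v_{2m-1} a permutation of length 2m-1, such that every symbol of U is greater than every symbol of V, every symbol of V is greater than every symbol of W, and V is square-free. Define P = p₁…p_{4m-1} by pᵢ = u_{(i+3)/4} if i ≡ 1 mod 4, pᵢ = w_{(i+1)/4} if i ≡ 3 mod 4, and pᵢ = v_{i/2} if i is even. Then P is square-free. -/
/-- Two sequences of distinct integers are order-isomorphic: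
same length and corresponding pairs compare the same way. -/
def OrdIso (p q : List ℤ) : Prop :=
  p.length = q.length ∧
  ∀ i j : ℕ, i < p.length → j < p.length →
    (p.getD i 0 < p.getD j 0 ↔ q.getD i 0 < q.getD j 0)

/-- A square is a sequence X₁X₂ with X₁ order-isomorphic to X₂ and |X₁| ≥ 2. -/
def IsSquareL (x : List ℤ) : Prop :=
  ∃ a b : List ℤ, x = a ++ b ∧ 2 ≤ a.length ∧ OrdIso a b

/-- A sequence contains a square if some contiguous factor is a square. -/
def ContainsSquare (p : List ℤ) : Prop :=
  ∃ f : List ℤ, f <:+: p ∧ IsSquareL f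

/-- Square-free: no contiguous factor is a square. -/
def SquareFreeL (p : List ℤ) : Prop := ¬ ContainsSquare p

/-- `Q` is an extension of `P` in position `i`:
`Q` has length `|P|+1` and deleting its (i+1)-th symbol gives a
sequence order-isomorphic to `P`. -/
def ExtL (Q P : List ℤ) (i : ℕ) : Prop :=
  Q.Nodup ∧ Q.length = P.length + 1 ∧ i ≤ P.length ∧ OrdIso (Q.eraseIdx i) P

/-- The interleaving pattern a₁b₁c₁b₂a₂b₃c₂… of length 4m-1 :
with 1-based index i, pᵢ = a_{(i+3)/4} if i ≡ 1 mod 4, pᵢ = c_{(i+1)/4}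
if i ≡ 3 mod 4, pᵢ = b_{i/2} if i is even. -/
def interleave (A B C : List ℤ) (m : ℕ) : List ℤ :=
  (List.range (4*m - 1)).map (fun k =>
    if (k+1) % 4 = 1 then A.getD ((k+4)/4 - 1) 0
    else if (k+1) % 4 = 3 then C.getD ((k+2)/4 - 1) 0
    else B.getD ((k+1)/2 - 1) 0)

/-!
Adjacent entries of `P` compare in the period-4 pattern `>, >, <, <`, because the symbols of `P`
cycle through `U, V, W, V` and every symbol of `V` lies between those of `W` and those of `U`.
Both halves of a square must show the same pattern, which forces its half-length to be a
multiple of `4`. The two halves then start at positions of equal parity, so the entries of `V`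
inside the square form a square in `V`.
-/

/-- The factor of `p` of length `2 * l` starting at position `s` is a square. -/
def HasSquareAt (p : List ℤ) (s l : ℕ) : Prop :=
  2 ≤ l ∧ s + 2 * l ≤ p.length ∧
    ∀ i j, i < l → j < l →
      (p.getD (s + i) 0 < p.getD (s + j) 0 ↔ p.getD (s + l + i) 0 < p.getD (s + l + j) 0)

lemma List.getD_append_append_of_lt {α : Type*} (pre f suf : List α) (d : α) {i : ℕ}
    (hi : i < f.length) : (pre ++ f ++ suf).getD (pre.length + i) d = f.getD i d := by
  rw [List.append_assoc, List.getD_append_right _ _ _ _ (by omega), Nat.add_sub_cancel_left,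
    List.getD_append _ _ _ _ hi]

lemma List.getD_mem_of_lt {α : Type*} {l : List α} {d : α} {i : ℕ} (h : i < l.length) :
    l.getD i d ∈ l := by
  rw [List.getD_eq_getElem _ _ h]
  exact List.getElem_mem h

lemma hasSquareAt_append_append_iff {pre a b suf : List ℤ} (hab : a.length = b.length)
    (ha : 2 ≤ a.length) :
    HasSquareAt (pre ++ (a ++ b) ++ suf) pre.length a.length ↔ OrdIso a b := by
  have hleft : ∀ i < a.length, (pre ++ (a ++ b) ++ suf).getD (pre.length + i) 0 = a.getD i 0 := by
    intro i hi
    rw [List.getD_append_append_of_lt _ _ _ _ (by simp; omega), List.getD_append _ _ _ _ hi]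
  have hright : ∀ i < a.length,
      (pre ++ (a ++ b) ++ suf).getD (pre.length + a.length + i) 0 = b.getD i 0 := by
    intro i hi
    rw [add_assoc, List.getD_append_append_of_lt _ _ _ _ (by simp; omega),
      List.getD_append_right _ _ _ _ (by omega), Nat.add_sub_cancel_left]
  constructor
  · rintro ⟨-, -, h⟩
    refine ⟨hab, fun i j hi hj => ?_⟩
    rw [← hleft i hi, ← hleft j hj, ← hright i hi, ← hright j hj]
    exact h i j hi hj
  · intro h
    refine ⟨ha, by simp; omega, fun i j hi hj => ?_⟩
    rw [hleft i hi, hleft j hj, hright i hi, hright j hj]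
    exact h.2 i j hi hj

theorem containsSquare_iff {p : List ℤ} : ContainsSquare p ↔ ∃ s l, HasSquareAt p s l := by
  constructor
  · rintro ⟨-, ⟨pre, suf, rfl⟩, a, b, rfl, ha, hab⟩
    exact ⟨pre.length, a.length, (hasSquareAt_append_append_iff hab.1 ha).2 hab⟩
  · rintro ⟨s, l, hl, hfit, hiso⟩
    set f := (p.drop s).take (2 * l)
    have hp : p = p.take s ++ (f.take l ++ f.drop l) ++ (p.drop s).drop (2 * l) := by
      simp only [f, List.take_append_drop, List.append_assoc]
    have hs : (p.take s).length = s := by simp; omega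
    have hf : f.length = 2 * l := by simp only [f, List.length_take, List.length_drop]; omega
    have hfl : (f.take l).length = l := by simp only [List.length_take]; omega
    have hlen : (f.take l).length = (f.drop l).length := by simp only [List.length_drop]; omega
    refine ⟨f, (List.take_prefix _ _).isInfix.trans (List.drop_suffix _ _).isInfix,
      f.take l, f.drop l, (List.take_append_drop _ _).symm, by omega, ?_⟩
    rw [← hasSquareAt_append_append_iff hlen (by omega), ← hp, hs, hfl]
    exact ⟨hl, hfit, hiso⟩

lemma HasSquareAt.lt_succ_iff {p : List ℤ} {s l i : ℕ} (h : HasSquareAt p s l) (hi : i + 1 < l) :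
    p.getD (s + i) 0 < p.getD (s + i + 1) 0 ↔ p.getD (s + l + i) 0 < p.getD (s + l + i + 1) 0 :=
  h.2.2 i (i + 1) (by omega) hi

lemma HasSquareAt.of_odd_positions {p q : List ℤ} {s t : ℕ}
    (hpq : ∀ x, p.getD (2 * x + 1) 0 = q.getD x 0) (hlen : p.length ≤ 2 * q.length + 1)
    (h : HasSquareAt p s (2 * t)) (ht : 2 ≤ t) : HasSquareAt q (s / 2) t := by
  obtain ⟨-, hfit, hiso⟩ := h
  refine ⟨ht, by omega, fun i j hi hj => ?_⟩
  -- `d` is the offset of the first odd position at or after `s`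
  set d := 2 * (s / 2) + 1 - s
  have hfirst : ∀ r, q.getD (s / 2 + r) 0 = p.getD (s + (2 * r + d)) 0 := fun r => by
    rw [← hpq]; congr 1; omega
  have hsecond : ∀ r, q.getD (s / 2 + t + r) 0 = p.getD (s + 2 * t + (2 * r + d)) 0 := fun r => by
    rw [← hpq]; congr 1; omega
  rw [hfirst, hfirst, hsecond, hsecond]
  exact hiso _ _ (by omega) (by omega)

lemma four_dvd_of_mod_four_pattern {s l : ℕ} (hl : 2 ≤ l)
    (h : ∀ i, i + 1 < l → (2 ≤ (s + i) % 4 ↔ 2 ≤ (s + l + i) % 4)) : 4 ∣ l := by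
  have h0 := h 0 (by omega)
  rcases lt_or_ge l 3 with hl3 | hl3
  · omega
  · have h1 := h 1 (by omega)
    omega

lemma interleave_length (A B C : List ℤ) (m : ℕ) :
    (interleave A B C m).length = 4 * m - 1 := by
  simp [interleave]

section Interleave

variable {A B C : List ℤ} {m k : ℕ}

lemma interleave_getD (hk : k < 4 * m - 1) :
    (interleave A B C m).getD k 0 =
      if k % 4 = 0 then A.getD (k / 4) 0
      else if k % 4 = 2 then C.getD (k / 4) 0
      else B.getD (k / 2) 0 := by
  rw [interleave, List.getD_eq_getElem _ _ (by simpa using hk)]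
  simp only [List.getElem_map, List.getElem_range]
  rcases (by omega : k % 4 = 0 ∨ k % 4 = 1 ∨ k % 4 = 2 ∨ k % 4 = 3) with h4 | h4 | h4 | h4
  · rw [if_pos (by omega), if_pos h4]
    congr 1; omega
  · rw [if_neg (by omega), if_neg (by omega), if_neg (by omega), if_neg (by omega)]
    congr 1; omega
  · rw [if_neg (by omega), if_pos (by omega), if_neg (by omega), if_pos h4]
    congr 1; omega
  · rw [if_neg (by omega), if_neg (by omega), if_neg (by omega), if_neg (by omega)]
    congr 1; omega

lemma interleave_getD_odd (hB : B.length = 2 * m - 1) (x : ℕ) :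
    (interleave A B C m).getD (2 * x + 1) 0 = B.getD x 0 := by
  rcases lt_or_ge (2 * x + 1) (4 * m - 1) with hx | hx
  · rw [interleave_getD hx, if_neg (by omega), if_neg (by omega)]
    congr 1; omega
  · rw [List.getD_eq_default _ _ (by rw [interleave_length]; omega),
      List.getD_eq_default _ _ (by omega)]

lemma interleave_getD_mem_left (hA : A.length = m) (hk : k < 4 * m - 1) (h4 : k % 4 = 0) :
    (interleave A B C m).getD k 0 ∈ A := by
  rw [interleave_getD hk, if_pos h4]
  exact List.getD_mem_of_lt (by omega)

lemma interleave_getD_mem_right (hC : C.length = m) (hk : k < 4 * m - 1) (h4 : k % 4 = 2) :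
    (interleave A B C m).getD k 0 ∈ C := by
  rw [interleave_getD hk, if_neg (by omega), if_pos h4]
  exact List.getD_mem_of_lt (by omega)

lemma interleave_getD_mem_middle (hB : B.length = 2 * m - 1) (hk : k < 4 * m - 1)
    (h2 : k % 2 = 1) : (interleave A B C m).getD k 0 ∈ B := by
  obtain ⟨x, rfl⟩ : ∃ x, k = 2 * x + 1 := ⟨k / 2, by omega⟩
  rw [interleave_getD_odd hB]
  exact List.getD_mem_of_lt (by omega)

lemma interleave_getD_lt_succ_iff (hA : A.length = m) (hB : B.length = 2 * m - 1)
    (hC : C.length = m) (hAB : ∀ a ∈ A, ∀ b ∈ B, b < a) (hBC : ∀ b ∈ B, ∀ c ∈ C, c < b)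
    (hk : k + 1 < 4 * m - 1) :
    (interleave A B C m).getD k 0 < (interleave A B C m).getD (k + 1) 0 ↔ 2 ≤ k % 4 := by
  set P := interleave A B C m
  rcases (by omega : k % 4 = 0 ∨ k % 4 = 1 ∨ k % 4 = 2 ∨ k % 4 = 3) with h4 | h4 | h4 | h4
  · have hgt : P.getD (k + 1) 0 < P.getD k 0 := hAB _ (interleave_getD_mem_left hA (by omega) h4) _
      (interleave_getD_mem_middle hB hk (by omega))
    exact iff_of_false hgt.not_gt (by omega)
  · have hgt : P.getD (k + 1) 0 < P.getD k 0 :=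
      hBC _ (interleave_getD_mem_middle hB (by omega) (by omega)) _
        (interleave_getD_mem_right hC hk (by omega))
    exact iff_of_false hgt.not_gt (by omega)
  · have hlt : P.getD k 0 < P.getD (k + 1) 0 :=
      hBC _ (interleave_getD_mem_middle hB hk (by omega)) _
        (interleave_getD_mem_right hC (by omega) h4)
    exact iff_of_true hlt (by omega)
  · have hlt : P.getD k 0 < P.getD (k + 1) 0 := hAB _ (interleave_getD_mem_left hA hk (by omega)) _
      (interleave_getD_mem_middle hB (by omega) (by omega))
    exact iff_of_true hlt (by omega)

end Interleave

theorem stmt4_general (m : ℕ) (U V W : List ℤ)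
    (hU : U.length = m) (hV : V.length = 2*m - 1) (hW : W.length = m)
    (hUV : ∀ u ∈ U, ∀ v ∈ V, v < u) (hVW : ∀ v ∈ V, ∀ w ∈ W, w < v)
    (hVsf : SquareFreeL V) :
    SquareFreeL (interleave U V W m) := by
  intro hP
  obtain ⟨s, l, hsq⟩ := containsSquare_iff.1 hP
  have ⟨hl, hfit, _⟩ := hsq
  have hlen := interleave_length U V W m
  have h4 : 4 ∣ l := four_dvd_of_mod_four_pattern hl fun i hi => by
    rw [← interleave_getD_lt_succ_iff (k := s + i) hU hV hW hUV hVW (by omega),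
      ← interleave_getD_lt_succ_iff (k := s + l + i) hU hV hW hUV hVW (by omega)]
    exact hsq.lt_succ_iff hi
  obtain ⟨t, rfl⟩ : ∃ t, l = 2 * t := ⟨l / 2, by omega⟩
  exact hVsf <| containsSquare_iff.2
    ⟨s / 2, t, hsq.of_odd_positions (interleave_getD_odd hV) (by omega) (by omega)⟩

theorem stmt4 (m : ℕ) (hm : 1 ≤ m) (U V W : List ℤ)
    (hU : U.length = m) (hV : V.length = 2*m - 1) (hW : W.length = m)
    (hUn : U.Nodup) (hVn : V.Nodup) (hWn : W.Nodup)
    (hUV : ∀ u ∈ U, ∀ v ∈ V, v < u) (hVW : ∀ v ∈ V, ∀ w ∈ W, w < v)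
    (hVsf : SquareFreeL V) :
    SquareFreeL (interleave U V W m) :=
  stmt4_general m U V W hU hV hW hUV hVW hVsf
end

section
/- Let P₁ be a permutation constructed by Construction 1 (the high-medium-low construction with pattern a₁b₁c₁b₂a₂b₃c₂… of length 4m-1, where all symbols of A are below those of B, which are below those of C, and B is square-free). Let x and y be integers with x > a > y for every symbol a of P₁. Then the permutation x P₁ y is square-free. -/
/-!
Give the positions of `x P y` tiers: `4` for `x`, `3` for the symbols of `C`, `2` for `B`, `1` for
`A` and `0` for `y`, so that symbols compare as their tiers do. Read along `x P y`, the steps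
between neighbouring tiers go down, up, up, down, periodically with period 4. A shift by
`L ≡ 2 (mod 4)` reverses every step and an odd shift reverses one of any two consecutive steps, so
the two halves of a square of half-length `L ≢ 0 (mod 4)` contain neighbours compared in opposite
ways. For `L ≡ 0 (mod 4)`, a square starting at `x` or ending at `y` is refuted by comparing with
`x` (resp. `y`); any other one lies inside `P`, and its even positions, which carry `B`, form a
square of half-length `L / 2` in `B`.
-/

def IsSquareAt (f : ℕ → ℤ) (s L : ℕ) : Prop :=
  ∀ i j, i < L → j < L → (f (s + i) < f (s + j) ↔ f (s + L + i) < f (s + L + j))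

lemma getD_append_append_length_add (u v w : List ℤ) {i : ℕ} (h : i < v.length) :
    (u ++ v ++ w).getD (u.length + i) 0 = v.getD i 0 := by
  rw [List.getD_append _ _ _ _ (by simpa using h), List.getD_append_right _ _ _ _ (by omega)]
  simp

lemma containsSquare_iff_s6 {p : List ℤ} :
    ContainsSquare p ↔ ∃ s L, 2 ≤ L ∧ s + 2 * L ≤ p.length ∧ IsSquareAt (p.getD · 0) s L := by
  constructor
  · rintro ⟨_, ⟨t, r, rfl⟩, a, b, rfl, hL, hlen, hiso⟩
    refine ⟨t.length, a.length, hL,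
      by simp only [List.append_assoc, List.length_append, add_le_add_iff_left]; omega,
      fun i j hi hj => ?_⟩
    have hfst : ∀ k < a.length, (t ++ (a ++ b) ++ r).getD (t.length + k) 0 = a.getD k 0 :=
      fun k hk => by
        rw [show t ++ (a ++ b) ++ r = t ++ a ++ (b ++ r) by simp]
        exact getD_append_append_length_add t a (b ++ r) hk
    have hsnd : ∀ k < a.length,
        (t ++ (a ++ b) ++ r).getD (t.length + a.length + k) 0 = b.getD k 0 :=
      fun k hk => by
        rw [← List.append_assoc, ← List.length_append]
        exact getD_append_append_length_add (t ++ a) b r (by omega)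
    simp only [hfst i hi, hfst j hj, hsnd i hi, hsnd j hj]
    exact hiso i j hi hj
  · rintro ⟨s, L, hL, hlen, hsq⟩
    refine ⟨((p.drop s).take L ++ ((p.drop s).drop L).take L),
      ⟨p.take s, p.drop (s + 2 * L), ?_⟩, _, _, rfl,
      by simp only [List.length_take, List.length_drop, le_inf_iff]; omega,
      by simp only [List.length_take, List.length_drop, List.drop_drop]; omega,
      fun i j hi hj => ?_⟩
    · rw [← List.take_add, ← two_mul, ← List.drop_drop, List.append_assoc, List.take_append_drop,
        List.take_append_drop]
    · simp only [List.length_take, List.length_drop, lt_inf_iff] at hi hj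
      have := hsq i j (by omega) (by omega)
      simpa [List.getElem?_take, hi.1, hj.1, Nat.add_assoc] using this

lemma IsSquareAt.arith_subseq {f g : ℕ → ℤ} {s d L a t : ℕ} (h : IsSquareAt f s (d * L))
    (ha : s ≤ a) (had : a < s + d) (hg : ∀ n < 2 * L, g (t + n) = f (a + d * n)) :
    IsSquareAt g t L := by
  intro i j hi hj
  have hk : ∀ k < L, a - s + d * k < d * L := fun k hk => by
    have := Nat.mul_le_mul_left d (show k + 1 ≤ L by omega)
    rw [Nat.mul_succ] at this; omega
  have hpos : ∀ k < L, a + d * k = s + (a - s + d * k) := fun k _ => by omega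
  have hpos' : ∀ k < L, a + d * (L + k) = s + d * L + (a - s + d * k) := fun k _ => by
    rw [Nat.mul_add]; omega
  rw [hg i (by omega), hg j (by omega), add_assoc t L i, add_assoc t L j, hg (L + i) (by omega),
    hg (L + j) (by omega), hpos i hi, hpos j hj, hpos' i hi, hpos' j hj]
  exact h _ _ (hk i hi) (hk j hj)

section Interleave

variable {A B C : List ℤ} {m k : ℕ}

lemma length_interleave : (interleave A B C m).length = 4 * m - 1 := by
  simp [interleave]

lemma getD_interleave (hk : k < 4 * m - 1) :
    (interleave A B C m).getD k 0 =
      if (k+1) % 4 = 1 then A.getD ((k+4)/4 - 1) 0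
      else if (k+1) % 4 = 3 then C.getD ((k+2)/4 - 1) 0
      else B.getD ((k+1)/2 - 1) 0 := by
  rw [List.getD_eq_getElem _ _ (by rwa [length_interleave])]
  simp [interleave]

lemma getD_interleave_mem_left (hA : A.length = m) (hk : k < 4 * m - 1) (h : k % 4 = 0) :
    (interleave A B C m).getD k 0 ∈ A := by
  rw [getD_interleave hk, if_pos (by omega), List.getD_eq_getElem _ _ (by omega)]
  exact List.getElem_mem _

lemma getD_interleave_mem_right (hC : C.length = m) (hk : k < 4 * m - 1) (h : k % 4 = 2) :
    (interleave A B C m).getD k 0 ∈ C := by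
  rw [getD_interleave hk, if_neg (by omega), if_pos (by omega),
    List.getD_eq_getElem _ _ (by omega)]
  exact List.getElem_mem _

lemma getD_interleave_of_odd (hk : k < 4 * m - 1) (h : k % 2 = 1) :
    (interleave A B C m).getD k 0 = B.getD (k / 2) 0 := by
  rw [getD_interleave hk, if_neg (by omega), if_neg (by omega)]
  congr 1
  omega

lemma getD_interleave_mem_middle (hB : B.length = 2 * m - 1) (hk : k < 4 * m - 1)
    (h : k % 2 = 1) : (interleave A B C m).getD k 0 ∈ B := by
  rw [getD_interleave_of_odd hk h, List.getD_eq_getElem _ _ (by omega)]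
  exact List.getElem_mem _

end Interleave

section Framed

variable {l : List ℤ} {x y : ℤ}

lemma getD_framed_zero : (x :: l ++ [y]).getD 0 0 = x := rfl

lemma getD_framed_succ {k : ℕ} (hk : k < l.length) :
    (x :: l ++ [y]).getD (k + 1) 0 = l.getD k 0 := by
  rw [List.cons_append, List.getD_cons_succ, List.getD_append _ _ _ _ hk]

lemma getD_framed_length : (x :: l ++ [y]).getD (l.length + 1) 0 = y := by
  rw [List.cons_append, List.getD_cons_succ, List.getD_append_right _ _ _ _ le_rfl]
  simp

end Framed

-- The height class of the symbol at position `i` of `x P y`, for `P` of length `4m-1`.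
def tier (m i : ℕ) : ℕ :=
  if i = 0 then 4 else if i = 4 * m then 0 else if i % 4 = 1 then 1 else if i % 4 = 3 then 3 else 2

section Tier

variable {m i : ℕ}

lemma tier_zero : tier m 0 = 4 := rfl

lemma tier_four_mul (hm : 1 ≤ m) : tier m (4 * m) = 0 := by
  unfold tier; split_ifs <;> omega

lemma tier_of_mod_four_eq_one (h : i % 4 = 1) : tier m i = 1 := by
  unfold tier; split_ifs <;> omega

lemma tier_of_mod_four_eq_three (h : i % 4 = 3) : tier m i = 3 := by
  unfold tier; split_ifs <;> omega

lemma tier_of_even (h0 : 0 < i) (h : i < 4 * m) (he : i % 2 = 0) : tier m i = 2 := by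
  unfold tier; split_ifs <;> omega

lemma tier_le_four : tier m i ≤ 4 := by
  unfold tier; split_ifs <;> omega

lemma tier_lt_tier_succ_iff (h : i < 4 * m) :
    tier m i < tier m (i + 1) ↔ i % 4 = 1 ∨ i % 4 = 2 := by
  unfold tier; split_ifs <;> first | contradiction | omega

lemma tier_succ_lt_tier_iff (h : i < 4 * m) :
    tier m (i + 1) < tier m i ↔ ¬(i % 4 = 1 ∨ i % 4 = 2) := by
  unfold tier; split_ifs <;> first | contradiction | omega

end Tier

section Monotone

variable {A B C : List ℤ} {m : ℕ}

lemma getD_interleave_lt_of_tier_lt (hA : A.length = m) (hB : B.length = 2 * m - 1)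
    (hC : C.length = m) (hAB : ∀ a ∈ A, ∀ b ∈ B, a < b) (hBC : ∀ b ∈ B, ∀ c ∈ C, b < c)
    {k l : ℕ} (hk : k < 4 * m - 1) (hl : l < 4 * m - 1) (h : tier m (k + 1) < tier m (l + 1)) :
    (interleave A B C m).getD k 0 < (interleave A B C m).getD l 0 := by
  rcases (by omega : k % 4 = 0 ∨ k % 2 = 1 ∨ k % 4 = 2) with hk4 | hk4 | hk4 <;>
  rcases (by omega : l % 4 = 0 ∨ l % 2 = 1 ∨ l % 4 = 2) with hl4 | hl4 | hl4 <;>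
  simp (disch := omega) only [tier_of_mod_four_eq_one, tier_of_mod_four_eq_three,
    tier_of_even] at h <;> try omega
  · exact hAB _ (getD_interleave_mem_left hA hk hk4) _ (getD_interleave_mem_middle hB hl hl4)
  · have hb : B.getD 0 0 ∈ B := by
      rw [List.getD_eq_getElem _ _ (by omega)]; exact List.getElem_mem _
    exact (hAB _ (getD_interleave_mem_left hA hk hk4) _ hb).trans
      (hBC _ hb _ (getD_interleave_mem_right hC hl hl4))
  · exact hBC _ (getD_interleave_mem_middle hB hk hk4) _ (getD_interleave_mem_right hC hl hl4)

lemma getD_framed_interleave_lt_of_tier_lt (hm : 1 ≤ m) (hA : A.length = m)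
    (hB : B.length = 2 * m - 1) (hC : C.length = m) (hAB : ∀ a ∈ A, ∀ b ∈ B, a < b)
    (hBC : ∀ b ∈ B, ∀ c ∈ C, b < c) {x y : ℤ} (hxy : ∀ a ∈ interleave A B C m, y < a ∧ a < x)
    {i j : ℕ} (h : tier m i < tier m j) (hi : i ≤ 4 * m) (hj : j ≤ 4 * m) :
    (x :: interleave A B C m ++ [y]).getD i 0 < (x :: interleave A B C m ++ [y]).getD j 0 := by
  have hP : (interleave A B C m).length = 4 * m - 1 := length_interleave
  have hbounds : ∀ k < 4 * m - 1,
      y < (interleave A B C m).getD k 0 ∧ (interleave A B C m).getD k 0 < x := fun k hk => by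
    rw [List.getD_eq_getElem _ _ (by omega)]; exact hxy _ (List.getElem_mem _)
  have hbot : (x :: interleave A B C m ++ [y]).getD (4 * m) 0 = y := by
    rw [show 4 * m = (interleave A B C m).length + 1 by omega, getD_framed_length]
  have hinner : ∀ {i}, i ≤ 4 * m → i ≠ 0 → i ≠ 4 * m → ∃ k < 4 * m - 1, i = k + 1 :=
    fun {i} _ _ _ => ⟨i - 1, by omega, by omega⟩
  by_cases hj0 : j = 0
  · subst hj0
    rw [getD_framed_zero]
    by_cases hi4 : i = 4 * m
    · rw [hi4, hbot]
      exact (hbounds 0 (by omega)).1.trans (hbounds 0 (by omega)).2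
    · obtain ⟨k, hk, rfl⟩ := hinner hi (by rintro rfl; exact lt_irrefl _ h) hi4
      rw [getD_framed_succ (hP ▸ hk)]
      exact (hbounds k hk).2
  by_cases hj4 : j = 4 * m
  · rw [hj4, tier_four_mul hm] at h; omega
  obtain ⟨l, hl, rfl⟩ := hinner hj hj0 hj4
  rw [getD_framed_succ (hP ▸ hl)]
  by_cases hi4 : i = 4 * m
  · rw [hi4, hbot]; exact (hbounds l hl).1
  by_cases hi0 : i = 0
  · rw [hi0, tier_zero] at h; exact absurd h (not_lt.2 tier_le_four)
  obtain ⟨k, hk, rfl⟩ := hinner hi hi0 hi4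
  rw [getD_framed_succ (hP ▸ hk)]
  exact getD_interleave_lt_of_tier_lt hA hB hC hAB hBC hk hl h

end Monotone

lemma exists_tier_flip {m s L : ℕ} (hL : 2 ≤ L) (hsL : s + 2 * L ≤ 4 * m + 1)
    (hbd : L % 4 = 0 → s = 0 ∨ s + 2 * L = 4 * m + 1) :
    ∃ i < L, ∃ j < L,
      tier m (s + i) < tier m (s + j) ∧ tier m (s + L + j) < tier m (s + L + i) := by
  by_cases hL4 : L % 4 = 0
  · rcases hbd hL4 with rfl | hs
    · refine ⟨3, by omega, 0, by omega, ?_, ?_⟩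
      · rw [tier_of_mod_four_eq_three (by omega), zero_add, tier_zero]; norm_num
      · rw [tier_of_even (by omega) (by omega) (by omega), tier_of_mod_four_eq_three (by omega)]
        norm_num
    · refine ⟨0, by omega, L - 1, by omega, ?_, ?_⟩
      · rw [tier_of_mod_four_eq_one (by omega), tier_of_even (by omega) (by omega) (by omega)]
        norm_num
      · rw [show s + L + (L - 1) = 4 * m by omega, tier_four_mul (by omega),
          tier_of_mod_four_eq_one (by omega)]
        norm_num
  · obtain ⟨k, hkL, hdiff⟩ : ∃ k, k + 1 < L ∧
        ¬((s + k) % 4 = 1 ∨ (s + k) % 4 = 2 ↔ (s + L + k) % 4 = 1 ∨ (s + L + k) % 4 = 2) := by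
      by_cases h0 : (s % 4 = 1 ∨ s % 4 = 2 ↔ (s + L) % 4 = 1 ∨ (s + L) % 4 = 2)
      · exact ⟨1, by omega, by omega⟩
      · exact ⟨0, by omega, h0⟩
    by_cases hup : (s + k) % 4 = 1 ∨ (s + k) % 4 = 2
    · refine ⟨k, by omega, k + 1, hkL, (tier_lt_tier_succ_iff (by omega)).2 hup, ?_⟩
      rw [← add_assoc]
      exact (tier_succ_lt_tier_iff (by omega)).2 (by tauto)
    · refine ⟨k + 1, hkL, k, by omega, ?_, ?_⟩
      · rw [← add_assoc]
        exact (tier_succ_lt_tier_iff (by omega)).2 hup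
      · rw [← add_assoc]
        exact (tier_lt_tier_succ_iff (by omega)).2 (by tauto)

lemma containsSquare_of_isSquareAt_framed_interleave {A B C : List ℤ} {m s L : ℕ} {x y : ℤ}
    (hB : B.length = 2 * m - 1)
    (hsq : IsSquareAt ((x :: interleave A B C m ++ [y]).getD · 0) s L)
    (hL : 2 ≤ L) (hL4 : L % 4 = 0) (hs : 1 ≤ s) (hsL : s + 2 * L ≤ 4 * m) :
    ContainsSquare B := by
  have hP : (interleave A B C m).length = 4 * m - 1 := length_interleave
  refine containsSquare_iff_s6.2 ⟨(s + s % 2) / 2 - 1, L / 2, by omega, by omega, ?_⟩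
  have hsq2 : IsSquareAt ((x :: interleave A B C m ++ [y]).getD · 0) s (2 * (L / 2)) := by
    rwa [Nat.mul_div_cancel' (by omega)]
  refine hsq2.arith_subseq (a := s + s % 2) (by omega) (by omega) fun n hn => ?_
  rw [show s + s % 2 + 2 * n = (s + s % 2 + 2 * n - 1) + 1 by omega,
    getD_framed_succ (by omega), getD_interleave_of_odd (by omega) (by omega)]
  congr 1
  omega

theorem stmt6_general (m : ℕ) (hm : 1 ≤ m) (A B C : List ℤ)
    (hA : A.length = m) (hB : B.length = 2*m - 1) (hC : C.length = m)
    (hAB : ∀ a ∈ A, ∀ b ∈ B, a < b) (hBC : ∀ b ∈ B, ∀ c ∈ C, b < c)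
    (hBsf : SquareFreeL B)
    (x y : ℤ) (hxy : ∀ a ∈ interleave A B C m, y < a ∧ a < x) :
    SquareFreeL (x :: interleave A B C m ++ [y]) := by
  intro hsq
  obtain ⟨s, L, hL, hsL, hsq⟩ := containsSquare_iff_s6.1 hsq
  have hlen : (x :: interleave A B C m ++ [y]).length = 4 * m + 1 := by
    simp only [List.cons_append, List.length_cons, List.length_append, length_interleave,
      List.length_nil]
    omega
  rw [hlen] at hsL
  by_cases hbd : L % 4 = 0 → s = 0 ∨ s + 2 * L = 4 * m + 1
  · obtain ⟨i, hi, j, hj, hij, hji⟩ := exists_tier_flip hL hsL hbd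
    have mono := @getD_framed_interleave_lt_of_tier_lt A B C m hm hA hB hC hAB hBC x y hxy
    exact lt_asymm ((hsq i j hi hj).1 (mono hij (by omega) (by omega)))
      (mono hji (by omega) (by omega))
  · push Not at hbd
    exact hBsf (containsSquare_of_isSquareAt_framed_interleave hB hsq hL hbd.1 (by omega)
      (by omega))

theorem stmt6 (m : ℕ) (hm : 1 ≤ m) (A B C : List ℤ)
    (hA : A.length = m) (hB : B.length = 2*m - 1) (hC : C.length = m)
    (hAn : A.Nodup) (hBn : B.Nodup) (hCn : C.Nodup)
    (hAB : ∀ a ∈ A, ∀ b ∈ B, a < b) (hBC : ∀ b ∈ B, ∀ c ∈ C, b < c)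
    (hBsf : SquareFreeL B)
    (x y : ℤ) (hxy : ∀ a ∈ interleave A B C m, y < a ∧ a < x) :
    SquareFreeL (x :: interleave A B C m ++ [y]) :=
  stmt6_general m hm A B C hA hB hC hAB hBC hBsf x y hxy
end

section
/- A square-free permutation of length n, where n ≥ 5, is {0,1,…,n}-crucial (S-crucial) if and only if it is {0,1,2,n-2,n-1,n}-crucial. -/
/-!
A square-free permutation has no square of length four, so the direction of the step
`L[j], L[j+1]` is opposite to that of `L[j+2], L[j+3]`. Let `Q` insert a symbol at position
`m+3` of `P`, with at least three symbols of `P` on each side. If `Q` were square-free, this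
alternation would hold for the steps of `Q` at `m, …, m+5` and for those of `P` at `m, …, m+4`,
which are the steps of `Q` at `m, m+1, m+4, m+5` together with the comparison of `Q[m+2]` and
`Q[m+4]`. These seven constraints are propositionally inconsistent, so only insertions at
`0, 1, 2, n-2, n-1, n` can avoid squares.
-/

def Rises (L : List ℤ) (j : ℕ) : Prop := L.getD j 0 < L.getD (j + 1) 0

lemma isSquareL_of_lt_iff_lt {a b c d : ℤ} (hab : a ≠ b) (hcd : c ≠ d) (h : a < b ↔ c < d) :
    IsSquareL [a, b, c, d] := by
  refine ⟨[a, b], [c, d], rfl, le_rfl, rfl, fun i j hi hj => ?_⟩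
  simp only [List.length_cons, List.length_nil] at hi hj
  interval_cases i <;> interval_cases j <;> simp [List.getD] <;> omega

lemma List.four_getElem_infix {α : Type*} (L : List α) {j : ℕ} (hj : j + 3 < L.length) :
    [L[j], L[j + 1], L[j + 2], L[j + 3]] <:+: L := by
  have hdrop : L.drop j = L[j] :: L[j + 1] :: L[j + 2] :: L[j + 3] :: L.drop (j + 4) := by
    rw [List.drop_eq_getElem_cons (by omega), List.drop_eq_getElem_cons (by omega),
      List.drop_eq_getElem_cons (by omega), List.drop_eq_getElem_cons hj]
  have hpre : [L[j], L[j + 1], L[j + 2], L[j + 3]] <+: L.drop j := by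
    rw [hdrop]
    exact List.prefix_append _ _
  exact hpre.isInfix.trans (L.drop_suffix j).isInfix

lemma SquareFreeL.rises_add_two_iff {L : List ℤ} (hnd : L.Nodup) (hsf : SquareFreeL L) {j : ℕ}
    (hj : j + 3 < L.length) : Rises L (j + 2) ↔ ¬ Rises L j := by
  have hne : ∀ k (hk : k + 1 < L.length), L[k] ≠ L[k + 1] := fun k hk he => by
    have := hnd.getElem_inj_iff.mp he
    omega
  unfold Rises
  rw [L.getD_eq_getElem 0 (show j < L.length by omega),
    L.getD_eq_getElem 0 (show j + 1 < L.length by omega),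
    L.getD_eq_getElem 0 (show j + 2 < L.length by omega), L.getD_eq_getElem 0 hj]
  suffices h : ¬ (L[j] < L[j + 1] ↔ L[j + 2] < L[j + 3]) by tauto
  exact fun h => hsf ⟨_, L.four_getElem_infix hj,
    isSquareL_of_lt_iff_lt (hne j (by omega)) (hne (j + 2) hj) h⟩

lemma OrdIso.rises_iff {p q : List ℤ} (h : OrdIso p q) {j : ℕ} (hj : j + 1 < p.length) :
    Rises p j ↔ Rises q j :=
  h.2 j (j + 1) (by omega) hj

lemma rises_eraseIdx_of_lt {Q : List ℤ} {i j : ℕ} (h : j + 1 < i) :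
    Rises (Q.eraseIdx i) j ↔ Rises Q j := by
  simp only [Rises, List.getD_eq_getElem?_getD, List.getElem?_eraseIdx_of_lt h,
    List.getElem?_eraseIdx_of_lt (show j < i by omega)]

lemma rises_eraseIdx_of_le {Q : List ℤ} {i j : ℕ} (h : i ≤ j) :
    Rises (Q.eraseIdx i) j ↔ Rises Q (j + 1) := by
  simp only [Rises, List.getD_eq_getElem?_getD, List.getElem?_eraseIdx_of_ge h,
    List.getElem?_eraseIdx_of_ge (show i ≤ j + 1 by omega)]

lemma ExtL.containsSquare_of_interior {Q P : List ℤ} {i : ℕ} (hQ : ExtL Q P i) (hnd : P.Nodup)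
    (hsf : SquareFreeL P) (hi : 3 ≤ i) (hiP : i + 3 ≤ P.length) : ContainsSquare Q := by
  obtain ⟨hQnd, hQlen, -, hiso⟩ := hQ
  obtain ⟨m, rfl⟩ : ∃ m, i = m + 3 := ⟨i - 3, by omega⟩
  by_contra hQsf
  have hQalt : ∀ j, j + 3 < Q.length → (Rises Q (j + 2) ↔ ¬ Rises Q j) :=
    fun j hj => SquareFreeL.rises_add_two_iff hQnd hQsf hj
  have hPalt : ∀ j, j + 3 < P.length →
      (Rises (Q.eraseIdx (m + 3)) (j + 2) ↔ ¬ Rises (Q.eraseIdx (m + 3)) j) := by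
    intro j hj
    have hlen := hiso.1
    rw [hiso.rises_iff (by omega), hiso.rises_iff (by omega)]
    exact hsf.rises_add_two_iff hnd hj
  have E0 : Rises (Q.eraseIdx (m + 3)) (m + 2) ↔ ¬ Rises Q m := by
    have h := hPalt m (by omega)
    rwa [rises_eraseIdx_of_lt (by omega : m + 1 < m + 3)] at h
  have E1 : Rises Q (m + 4) ↔ ¬ Rises Q (m + 1) := by
    have h := hPalt (m + 1) (by omega)
    rwa [rises_eraseIdx_of_le (by omega : m + 3 ≤ m + 1 + 2),
      rises_eraseIdx_of_lt (by omega : m + 1 + 1 < m + 3)] at h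
  have E2 : Rises Q (m + 5) ↔ ¬ Rises (Q.eraseIdx (m + 3)) (m + 2) := by
    have h := hPalt (m + 2) (by omega)
    rwa [rises_eraseIdx_of_le (by omega : m + 3 ≤ m + 2 + 2)] at h
  have Q0 : Rises Q (m + 2) ↔ ¬ Rises Q m := hQalt m (by omega)
  have Q1 : Rises Q (m + 3) ↔ ¬ Rises Q (m + 1) := hQalt (m + 1) (by omega)
  have Q2 : Rises Q (m + 4) ↔ ¬ Rises Q (m + 2) := hQalt (m + 2) (by omega)
  have Q3 : Rises Q (m + 5) ↔ ¬ Rises Q (m + 3) := hQalt (m + 3) (by omega)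
  -- `E0, Q0` and `E2, Q3` force `Rises Q (m + 2) ↔ Rises Q (m + 3)`; then `Q1, Q2` refute `E1`.
  tauto

theorem stmt11_general (n : ℕ) (P : List ℤ) (hnd : P.Nodup)
    (hlen : P.length = n) (hsf : SquareFreeL P) :
    (∀ i ≤ n, ∀ Q : List ℤ, ExtL Q P i → ContainsSquare Q) ↔
    (∀ i ∈ ({0, 1, 2, n - 2, n - 1, n} : Set ℕ), ∀ Q : List ℤ,
      ExtL Q P i → ContainsSquare Q) := by
  constructor
  · intro h i _ Q hQ
    exact h i (hlen ▸ hQ.2.2.1) Q hQ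
  · intro h i hi Q hQ
    by_cases hmem : i ∈ ({0, 1, 2, n - 2, n - 1, n} : Set ℕ)
    · exact h i hmem Q hQ
    · simp only [Set.mem_insert_iff, Set.mem_singleton_iff, not_or] at hmem
      exact hQ.containsSquare_of_interior hnd hsf (by omega) (by omega)

theorem stmt11 (n : ℕ) (hn : 5 ≤ n) (P : List ℤ) (hnd : P.Nodup)
    (hlen : P.length = n) (hsf : SquareFreeL P) :
    (∀ i ≤ n, ∀ Q : List ℤ, ExtL Q P i → ContainsSquare Q) ↔
    (∀ i ∈ ({0, 1, 2, n - 2, n - 1, n} : Set ℕ), ∀ Q : List ℤ,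
      ExtL Q P i → ContainsSquare Q) :=
  stmt11_general n P hnd hlen hsf
end
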